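/- Define d_i for 0 ≤ i ≤ n_- - 1 on words in W(n_-, n_+) by deleting the (i+1)'th minus sign, and d_{n_-} by deleting the final symbol if it is a minus sign and returning 0 otherwise; extend linearly over Z_2 and set d = Σ_{i=0}^{n_-} d_i. Then d ∘ d = 0. -/

import Mathlib

/-- Positions (0-indexed, left to right) of the minus signs (`false`) in a word. -/
def minusPos (w : List Bool) : List ℕ :=
  (List.range w.length).filter (fun i => w.getD i true = false)

/-- The boundary of a word `w` with `n₋` minus signs: the mod-2 sum over
`i = 0, …, n₋ - 1` of the word with the `(i+1)`'th minus sign deleted,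
plus (term `i = n₋`) the word with the final symbol deleted if that symbol is
a minus sign (and `0` otherwise). -/
noncomputable def dWord (w : List Bool) : List Bool →₀ ZMod 2 :=
  (∑ i ∈ Finset.range (w.count false),
    Finsupp.single (w.eraseIdx ((minusPos w).getD i 0)) (1 : ZMod 2))
  + (if w.getLast? = some false then Finsupp.single w.dropLast (1 : ZMod 2) else 0)

/-- The boundary map `d = Σ dᵢ` on the free `ℤ/2` vector space on words. -/
noncomputable def bd : (List Bool →₀ ZMod 2) →ₗ[ZMod 2] (List Bool →₀ ZMod 2) :=
  Finsupp.lift (List Bool →₀ ZMod 2) (ZMod 2) (List Bool) dWord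

/-!
Write `∂ₚ` for deleting the letter at position `p`. When a word ends in a minus sign, the
term `d_{n₋}` equals the `dᵢ` deleting that last minus sign, so the two cancel mod 2 and `d` is
the sum of `∂ₚ` over the minus signs at positions `p` other than the last one.
For `q < p` one has `∂_q ∂_p = ∂_{p-1} ∂_q`, so `(p, q) ↦ (q, p - 1)` (for `q < p`) and
`(p, q) ↦ (q + 1, p)` (otherwise) is a fixed-point-free involution of the index pairs of
`d ∘ d` preserving the word obtained; hence the terms of `d ∘ d` cancel in pairs.
-/

theorem List.eraseIdx_eraseIdx_of_lt {α : Type*} (w : List α) {p q : ℕ} (h : q < p) :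
    (w.eraseIdx p).eraseIdx q = (w.eraseIdx q).eraseIdx (p - 1) := by
  apply List.ext_getElem?
  intro j
  simp only [List.getElem?_eraseIdx]
  split_ifs <;> first | rfl | omega

def swapErasures (x : Σ _ : ℕ, ℕ) : Σ _ : ℕ, ℕ :=
  if x.2 < x.1 then ⟨x.2, x.1 - 1⟩ else ⟨x.2 + 1, x.1⟩

theorem swapErasures_involutive : Function.Involutive swapErasures := by
  rintro ⟨p, q⟩
  grind [swapErasures]

theorem swapErasures_ne (x : Σ _ : ℕ, ℕ) : swapErasures x ≠ x := by
  grind [swapErasures]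

theorem eraseIdx_swapErasures {α : Type*} (w : List α) (x : Σ _ : ℕ, ℕ) :
    (w.eraseIdx (swapErasures x).1).eraseIdx (swapErasures x).2 =
      (w.eraseIdx x.1).eraseIdx x.2 := by
  obtain ⟨p, q⟩ := x
  by_cases h : q < p
  · simp only [swapErasures, if_pos h]
    exact (List.eraseIdx_eraseIdx_of_lt w h).symm
  · simp only [swapErasures, if_neg h]
    exact List.eraseIdx_eraseIdx_of_lt w (by omega)

section InteriorDeletion

variable {α : Type*} [DecidableEq α] (R : Type*) [Semiring R] (a : α)

def interiorPos (w : List α) : Finset ℕ :=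
  (Finset.range (w.length - 1)).filter (fun p => w[p]? = some a)

variable {a} in
theorem mem_interiorPos {w : List α} {p : ℕ} :
    p ∈ interiorPos a w ↔ p + 1 < w.length ∧ w[p]? = some a := by
  simp only [interiorPos, Finset.mem_filter, Finset.mem_range]
  exact Iff.and (by omega) Iff.rfl

variable {a} in
theorem swapErasures_mem {w : List α} {x : Σ _ : ℕ, ℕ}
    (hx : x ∈ (interiorPos a w).sigma fun p => interiorPos a (w.eraseIdx p)) :
    swapErasures x ∈ (interiorPos a w).sigma fun p => interiorPos a (w.eraseIdx p) := by
  simp only [Finset.mem_sigma, mem_interiorPos, List.length_eraseIdx,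
    List.getElem?_eraseIdx] at hx ⊢
  grind [swapErasures]

noncomputable def deleteInterior (w : List α) : List α →₀ R :=
  ∑ p ∈ interiorPos a w, Finsupp.single (w.eraseIdx p) 1

noncomputable def deleteInteriorMap : (List α →₀ R) →ₗ[R] (List α →₀ R) :=
  Finsupp.lift _ R _ (deleteInterior R a)

theorem deleteInteriorMap_single (w : List α) :
    deleteInteriorMap R a (Finsupp.single w 1) = deleteInterior R a w := by
  simp [deleteInteriorMap]

theorem deleteInteriorMap_deleteInterior [CharP R 2] (w : List α) :
    deleteInteriorMap R a (deleteInterior R a w) = 0 := by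
  simp only [deleteInterior, map_sum, deleteInteriorMap_single]
  rw [Finset.sum_sigma']
  refine Finset.sum_involution (fun x _ => swapErasures x) (fun x _ => ?_)
    (fun x _ _ => swapErasures_ne x) (fun _ => swapErasures_mem)
    (fun x _ => swapErasures_involutive x)
  rw [eraseIdx_swapErasures, ← Finsupp.single_add, CharTwo.add_self_eq_zero, Finsupp.single_zero]

theorem deleteInteriorMap_comp_self [CharP R 2] :
    (deleteInteriorMap R a).comp (deleteInteriorMap R a) = 0 :=
  Finsupp.lhom_ext' fun w => LinearMap.ext_ring <| by
    simp [deleteInteriorMap_single, deleteInteriorMap_deleteInterior]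

end InteriorDeletion

theorem mem_minusPos {w : List Bool} {p : ℕ} : p ∈ minusPos w ↔ w[p]? = some false := by
  simp only [minusPos, List.mem_filter, List.mem_range, List.getD_eq_getElem?_getD,
    decide_eq_true_eq]
  grind

theorem minusPos_cons (b : Bool) (w : List Bool) :
    minusPos (b :: w) = (if b = false then [0] else []) ++ (minusPos w).map Nat.succ := by
  unfold minusPos
  rw [List.length_cons, List.range_succ_eq_map, List.filter_cons, List.filter_map]
  cases b <;> simp [Function.comp_def]

theorem length_minusPos (w : List Bool) : (minusPos w).length = w.count false := by
  induction w with
  | nil => rfl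
  | cons b w ih => cases b <;> simp [minusPos_cons, ih]

theorem sum_range_getD_eq_sum_map {M : Type*} [AddCommMonoid M] (l : List ℕ) (f : ℕ → M) :
    ∑ i ∈ Finset.range l.length, f (l.getD i 0) = (l.map f).sum := by
  induction l with
  | nil => simp
  | cons n l ih =>
    rw [List.length_cons, Finset.sum_range_succ', List.map_cons, List.sum_cons, add_comm]
    simp only [List.getD_cons_succ, List.getD_cons_zero, ih]

theorem dWord_eq_deleteInterior (w : List Bool) : dWord w = deleteInterior (ZMod 2) false w := by
  have hsum : ∑ i ∈ Finset.range (w.count false),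
      Finsupp.single (w.eraseIdx ((minusPos w).getD i 0)) (1 : ZMod 2) =
      ∑ p ∈ (minusPos w).toFinset, Finsupp.single (w.eraseIdx p) 1 := by
    rw [← length_minusPos,
      sum_range_getD_eq_sum_map _ fun p => Finsupp.single (w.eraseIdx p) (1 : ZMod 2)]
    exact (List.sum_toFinset _ (List.nodup_range.filter _)).symm
  rw [dWord, hsum, deleteInterior]
  split_ifs with hlast
  · have hw : w ≠ [] := by rintro rfl; simp at hlast
    have hpos : w.length - 1 + 1 = w.length := Nat.sub_add_cancel (List.length_pos_iff.2 hw)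
    have hsplit : (minusPos w).toFinset = insert (w.length - 1) (interiorPos false w) := by
      rw [List.getLast?_eq_getElem?] at hlast
      ext p
      simp only [List.mem_toFinset, mem_minusPos, Finset.mem_insert, mem_interiorPos]
      grind
    rw [hsplit, Finset.sum_insert (by simp [mem_interiorPos, hpos]),
      List.dropLast_eq_eraseIdx hpos, add_comm, ← add_assoc, ← Finsupp.single_add,
      CharTwo.add_self_eq_zero, Finsupp.single_zero, zero_add]
  · have hsame : (minusPos w).toFinset = interiorPos false w := by
      rw [List.getLast?_eq_getElem?] at hlast
      ext p
      simp only [List.mem_toFinset, mem_minusPos, mem_interiorPos]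
      grind
    rw [hsame, add_zero]

theorem bd_eq_deleteInteriorMap : bd = deleteInteriorMap (ZMod 2) false := by
  rw [bd, deleteInteriorMap]
  exact congrArg _ (funext dWord_eq_deleteInterior)

/-- The boundary map `d`, deleting minus signs as specified, squares to
zero. -/
theorem stmt18 : bd.comp bd = 0 := by
  rw [bd_eq_deleteInteriorMap]
  exact deleteInteriorMap_comp_self (ZMod 2) false
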